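/- Let G be a finite simple undirected graph, s and t distinct non-adjacent vertices of G, and u ∈ V(G)\{s,t}. Then the set of minimal s,t-separators of G that exclude u equals the set of minimal s,t-separators of Sat(G,{u}), provided s and t are non-adjacent in Sat(G,{u}). -/

import Mathlib

variable {V : Type*}

/-- The graph obtained from `G` by deleting the vertices in `S` (deleted vertices
become isolated; components of vertices outside `S` are the components of `G − S`). -/
def gdel (G : SimpleGraph V) (S : Set V) : SimpleGraph V where
  Adj a b := G.Adj a b ∧ a ∉ S ∧ b ∉ S
  symm := by
    constructor
    intro a b h
    exact ⟨h.1.symm, h.2.2, h.2.1⟩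
  loopless := by
    constructor
    intro a h
    exact G.irrefl h.1

/-- `compS G S v` is the vertex set of the connected component of `v` in `G − S`. -/
def compS (G : SimpleGraph V) (S : Set V) (v : V) : Set V :=
  {w | (gdel G S).Reachable v w}

/-- `S` is an `s,t`-separator of `G`: `S ⊆ V(G) \ {s,t}` and `s` and `t` lie in
different connected components of `G − S`. -/
def IsSep (G : SimpleGraph V) (s t : V) (S : Set V) : Prop :=
  s ∉ S ∧ t ∉ S ∧ ¬ (gdel G S).Reachable s t

/-- A minimal `s,t`-separator: no proper subset is an `s,t`-separator. -/
def IsMinSep (G : SimpleGraph V) (s t : V) (S : Set V) : Prop :=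
  IsSep G s t S ∧ ∀ S' : Set V, S' ⊂ S → ¬ IsSep G s t S'

/-- The (open) neighborhood of a vertex set `C` in `G`. -/
def nbdSet (G : SimpleGraph V) (C : Set V) : Set V :=
  {v | v ∉ C ∧ ∃ w ∈ C, G.Adj v w}

/-- `Sat G U`: the graph obtained from `G` by turning the closed neighborhood
`N_G[u]` of each `u ∈ U` into a clique. -/
def Sat (G : SimpleGraph V) (U : Set V) : SimpleGraph V :=
  G ⊔ SimpleGraph.fromRel (fun x y =>
    ∃ u ∈ U, x ∈ insert u (G.neighborSet u) ∧ y ∈ insert u (G.neighborSet u))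

lemma sat_adj_u {G : SimpleGraph V} {u x : V} (h : (Sat G {u}).Adj x u) : G.Adj x u := by
  rcases h with h | ⟨hne, h | h⟩
  · exact h
  · rcases h with ⟨u', hu', hx, hu2⟩
    simp only [Set.mem_singleton_iff] at hu'
    subst hu'
    rcases hx with rfl | hx
    · exact absurd rfl hne
    · exact (G.adj_symm hx)
  · rcases h with ⟨u', hu', hu2, hx⟩
    simp only [Set.mem_singleton_iff] at hu'
    subst hu'
    rcases hx with rfl | hx
    · exact absurd rfl hne.symm
    · exact (G.adj_symm hx)

lemma sat_clique {G : SimpleGraph V} {u x y : V} (hx : G.Adj x u) (hy : G.Adj y u)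
    (hxy : x ≠ y) : (Sat G {u}).Adj x y := by
  right
  exact ⟨hxy, Or.inl ⟨u, rfl, Or.inr hx.symm, Or.inr hy.symm⟩⟩

open SimpleGraph

lemma gdel_mono {G H : SimpleGraph V} (h : G ≤ H) (S : Set V) : gdel G S ≤ gdel H S := by
  intro a b hab
  exact ⟨h hab.1, hab.2.1, hab.2.2⟩

lemma reach_sat_to_G {G : SimpleGraph V} {u : V} {S : Set V} (huS : u ∉ S) {x y : V}
    (h : (gdel (Sat G {u}) S).Reachable x y) : (gdel G S).Reachable x y := by
  obtain ⟨w⟩ := h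
  induction w with
  | nil => exact Reachable.refl _
  | cons hadj p ih =>
    refine Reachable.trans ?_ ih
    obtain ⟨hS, ha, hb⟩ := hadj
    rcases hS with hG | ⟨hne, hrel⟩
    · exact (Adj.reachable ⟨hG, ha, hb⟩)
    · have : ∀ c d : V, c ∈ insert u (G.neighborSet u) → d ∈ insert u (G.neighborSet u) →
          c ≠ d → c ∉ S → d ∉ S → (gdel G S).Reachable c d := by
        intro c d hc hd hcd hcS hdS
        rcases hc with rfl | hc
        · rcases hd with rfl | hd
          · exact absurd rfl hcd
          · exact Adj.reachable (G := gdel G S) ⟨hd, hcS, hdS⟩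
        · rcases hd with rfl | hd
          · exact Adj.reachable (G := gdel G S) ⟨hc.symm, hcS, hdS⟩
          · exact (Adj.reachable (G := gdel G S) ⟨hc.symm, hcS, huS⟩).trans
              (Adj.reachable (G := gdel G S) ⟨hd, huS, hdS⟩)
      rcases hrel with ⟨u', hu', hc, hd⟩ | ⟨u', hu', hd, hc⟩ <;>
        simp only [Set.mem_singleton_iff] at hu' <;> subst hu' <;>
        exact this _ _ hc hd hne ha hb

lemma bypass {G : SimpleGraph V} {u : V} (T : Set V) :
    ∀ n (x y : V), x ≠ u → y ≠ u →
    ∀ w : (gdel (Sat G {u}) T).Walk x y, w.length = n →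
    (gdel (Sat G {u}) (insert u T)).Reachable x y := by
  intro n
  induction n using Nat.strong_induction_on with
  | _ n ih =>
    intro x y hx hy w hl
    cases w with
    | nil => exact Reachable.refl _
    | @cons _ z _ hadj p =>
      by_cases hz : u = z
      · subst hz
        cases p with
        | nil => exact absurd rfl hy
        | @cons _ z2 _ hadj2 p2 =>
          have hz2 : z2 ≠ u := hadj2.1.ne.symm
          have hr := ih p2.length (by simp [← hl]) z2 y hz2 hy p2 rfl
          by_cases hxz : x = z2
          · subst hxz; exact hr
          · have hxS : x ∉ insert u T := by
              simp only [Set.mem_insert_iff]; push_neg; exact ⟨hx, hadj.2.1⟩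
            have hz2S : z2 ∉ insert u T := by
              simp only [Set.mem_insert_iff]; push_neg; exact ⟨hz2, hadj2.2.2⟩
            have hadjx : (Sat G {u}).Adj x z2 :=
              sat_clique (sat_adj_u hadj.1) (sat_adj_u (hadj2.1.symm)) hxz
            have hstep : (gdel (Sat G {u}) (insert u T)).Adj x z2 := ⟨hadjx, hxS, hz2S⟩
            exact hstep.reachable.trans hr
      · have hr := ih p.length (by simp [← hl]) z y (Ne.symm hz) hy p rfl
        have hxS : x ∉ insert u T := by
          simp only [Set.mem_insert_iff]; push_neg; exact ⟨hx, hadj.2.1⟩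
        have hzS : z ∉ insert u T := by
          simp only [Set.mem_insert_iff]; push_neg; exact ⟨Ne.symm hz, hadj.2.2⟩
        have hstep : (gdel (Sat G {u}) (insert u T)).Adj x z := ⟨hadj.1, hxS, hzS⟩
        exact hstep.reachable.trans hr

lemma sep_iff_sat {G : SimpleGraph V} {u s t : V} {S : Set V} (huS : u ∉ S) :
    IsSep G s t S ↔ IsSep (Sat G {u}) s t S := by
  unfold IsSep
  refine and_congr_right fun _ => and_congr_right fun _ => not_congr ?_
  constructor
  · exact fun h => h.mono (gdel_mono le_sup_left S)
  · exact fun h => reach_sat_to_G huS h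

/-- The minimal `s,t`-separators of `G` excluding `u` are exactly the
minimal `s,t`-separators of `Sat(G,{u})`. -/
theorem stmt_11 [Fintype V] (G : SimpleGraph V) (s t u : V) (hst : s ≠ t)
    (hadj : ¬ G.Adj s t) (hus : u ≠ s) (hut : u ≠ t)
    (hsat : ¬ (Sat G {u}).Adj s t) :
    {S : Set V | IsMinSep G s t S ∧ u ∉ S}
      = {S : Set V | IsMinSep (Sat G {u}) s t S} := by

  ext S
  simp only [Set.mem_setOf_eq]
  constructor
  · rintro ⟨⟨hsep, hmin⟩, huS⟩
    refine ⟨(sep_iff_sat huS).mp hsep, ?_⟩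
    intro S' hS' hsep'
    have huS' : u ∉ S' := fun h => huS (hS'.1 h)
    exact hmin S' hS' ((sep_iff_sat huS').mpr hsep')
  · rintro ⟨hsep, hmin⟩
    have huS : u ∉ S := by
      intro huS
      refine hmin (S \ {u}) ⟨Set.diff_subset, fun h => (h huS).2 rfl⟩ ?_
      refine ⟨fun h => hsep.1 h.1, fun h => hsep.2.1 h.1, ?_⟩
      intro hr
      obtain ⟨w⟩ := hr
      have := bypass (G := G) (S \ {u}) w.length s t hus.symm hut.symm w rfl
      rw [Set.insert_diff_singleton, Set.insert_eq_of_mem huS] at this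
      exact hsep.2.2 this
    refine ⟨⟨(sep_iff_sat huS).mpr hsep, ?_⟩, huS⟩
    intro S' hS' hsep'
    have huS' : u ∉ S' := fun h => huS (hS'.1 h)
    exact hmin S' hS' ((sep_iff_sat huS').mp hsep')
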